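/- arXiv:1505.06656 — 6 statements merged into one kernel-verified Lean document; each statement's English description precedes it below -/
import Mathlib

section
/- Let t ≥ 3 be an integer, let x₁, …, x_t be real numbers, and let δ and μ be positive real numbers satisfying 0 < δ ≤ 1/(t−2) − 1/μ. Suppose that x₁ + ⋯ + x_t = 0 and that |x_i| ≤ δ · max{|x₁|, |x₂|} for all i = 3, …, t. Then |x₁ + x₂| ≤ μδ · min{|x₁|, |x₂|}. -/
/-- Let `t ≥ 3` be an integer, `x₁, …, x_t` real numbers, and `δ, μ`
positive reals with `0 < δ ≤ 1/(t-2) - 1/μ`. If `x₁ + ⋯ + x_t = 0` and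
`|x_i| ≤ δ · max{|x₁|, |x₂|}` for `i = 3, …, t`, then
`|x₁ + x₂| ≤ μ δ · min{|x₁|, |x₂|}`. (Indices are 0-based here.) -/
theorem stmt_2 (t : ℕ) (ht : 3 ≤ t) (x : Fin t → ℝ) (δ μ : ℝ)
    (hδ : 0 < δ) (hμ : 0 < μ)
    (hδμ : δ ≤ 1 / ((t : ℝ) - 2) - 1 / μ)
    (hsum : ∑ i, x i = 0)
    (hbound : ∀ i : Fin t, 2 ≤ (i : ℕ) →
      |x i| ≤ δ * max |x ⟨0, by omega⟩| |x ⟨1, by omega⟩|) :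
    |x ⟨0, by omega⟩ + x ⟨1, by omega⟩| ≤
      μ * δ * min |x ⟨0, by omega⟩| |x ⟨1, by omega⟩| := by
  set i0 : Fin t := ⟨0, by omega⟩
  set i1 : Fin t := ⟨1, by omega⟩
  set a := x i0
  set b := x i1
  set M := max |a| |b| with hM
  set m := min |a| |b| with hm
  have hne : i0 ≠ i1 := by simp [i0, i1, Fin.ext_iff]
  set P : Finset (Fin t) := {i0, i1} with hP
  have hPsub : P ⊆ Finset.univ := Finset.subset_univ _
  have hsumP : ∑ i ∈ P, x i = a + b := by
    rw [hP, Finset.sum_pair hne]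
  have hsplit : ∑ i ∈ Finset.univ \ P, x i + ∑ i ∈ P, x i = 0 := by
    rw [Finset.sum_sdiff hPsub, hsum]
  have hcard : (Finset.univ \ P).card = t - 2 := by
    rw [Finset.card_sdiff_of_subset hPsub, Finset.card_univ, Fintype.card_fin, hP,
      Finset.card_pair hne]
  have hmem : ∀ i ∈ Finset.univ \ P, |x i| ≤ δ * M := by
    intro i hi
    apply hbound
    simp only [Finset.mem_sdiff, hP, Finset.mem_insert, Finset.mem_singleton] at hi
    have h0 : (i : ℕ) ≠ 0 := fun h => hi.2 (Or.inl (Fin.ext h))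
    have h1 : (i : ℕ) ≠ 1 := fun h => hi.2 (Or.inr (Fin.ext h))
    omega
  have hab : |a + b| ≤ ((t : ℝ) - 2) * (δ * M) := by
    have h1 : a + b = -(∑ i ∈ Finset.univ \ P, x i) := by linarith [hsplit, hsumP]
    rw [h1, abs_neg]
    calc |∑ i ∈ Finset.univ \ P, x i| ≤ ∑ i ∈ Finset.univ \ P, |x i| :=
          Finset.abs_sum_le_sum_abs _ _
      _ ≤ ∑ _i ∈ Finset.univ \ P, δ * M := Finset.sum_le_sum hmem
      _ = ((t : ℝ) - 2) * (δ * M) := by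
          rw [Finset.sum_const, hcard, nsmul_eq_mul]
          have : ((t - 2 : ℕ) : ℝ) = (t : ℝ) - 2 := by
            push_cast [Nat.cast_sub (by omega : 2 ≤ t)]; ring
          rw [this]
  have hMm : M ≤ m + |a + b| := by
    rcases le_total |a| |b| with h | h
    · have : |b| ≤ |a| + |a + b| := by
        calc |b| = |(a + b) - a| := by ring_nf
          _ ≤ |a + b| + |a| := abs_sub _ _
          _ = |a| + |a + b| := by ring
      simp [hM, hm, max_eq_right h, min_eq_left h]; linarith
    · have : |a| ≤ |b| + |a + b| := by
        calc |a| = |(a + b) - b| := by ring_nf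
          _ ≤ |a + b| + |b| := abs_sub _ _
          _ = |b| + |a + b| := by ring
      simp [hM, hm, max_eq_left h, min_eq_right h]; linarith
  have hT : (0:ℝ) < (t : ℝ) - 2 := by
    have : (3:ℝ) ≤ t := by exact_mod_cast ht
    linarith
  have hδμ' : ((t:ℝ) - 2) * δ ≤ 1 - ((t:ℝ) - 2) / μ := by
    have := mul_le_mul_of_nonneg_left hδμ hT.le
    rw [mul_sub] at this
    rw [mul_one_div] at this
    rw [div_self hT.ne'] at this
    have h2 : ((t:ℝ) - 2) * (1 / μ) = ((t:ℝ) - 2) / μ := by ring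
    linarith [this, h2.le]
  have hm0 : 0 ≤ m := le_min (abs_nonneg _) (abs_nonneg _)
  have hA0 : 0 ≤ |a + b| := abs_nonneg _
  have key : |a + b| ≤ μ * δ * m := by
    have h1 : |a + b| ≤ ((t:ℝ) - 2) * δ * (m + |a + b|) := by
      calc |a + b| ≤ ((t : ℝ) - 2) * (δ * M) := hab
        _ ≤ ((t : ℝ) - 2) * (δ * (m + |a + b|)) := by
            apply mul_le_mul_of_nonneg_left _ hT.le
            exact mul_le_mul_of_nonneg_left hMm hδ.le
        _ = ((t:ℝ) - 2) * δ * (m + |a + b|) := by ring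
    have h2 : |a + b| * (((t:ℝ) - 2) / μ) ≤ ((t:ℝ) - 2) * δ * m := by
      nlinarith [mul_le_mul_of_nonneg_left hδμ' hA0]
    have h3 : |a + b| * (((t:ℝ) - 2) / μ) = |a + b| * ((t:ℝ) - 2) / μ := by ring
    rw [h3] at h2
    rw [div_le_iff₀ hμ] at h2
    nlinarith
  exact key
end

section
/- With the notation below, for every integer a one has U_{2n−1}(a) = (−c)^{(n−1)a} · n · D^{n−1} · ( D^n (ε^a + ε̄^a) + (−1)^{n−1} ω^n (ε^a − ε̄^a) ); consequently the sequence (U_{2n−1}(a))_{a∈ℤ} satisfies the recurrence U_{2n−1}(a+2) = 2(−c)^{n−1} D^n · U_{2n−1}(a+1) + c · U_{2n−1}(a), with initial conditions U_{2n−1}(0) = 2nD^{2n−1} and U_{2n−1}(1) = 2nD^{n−1} if n is even, U_{2n−1}(1) = 2nD^{n−1}(2D^{2n} + c) if n is odd. -/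
/-!
The embeddings of `ℚ(ω)` into `ℂ` send `ω` to the roots of `X^{2n} - (D^{2n} + c)`, which are the
`n`-th roots `z` of `ω^n` and of `-ω^n`; for these `D^n + z^n` is `ε`, respectively `ε̄`. Hence
`F_a(X, 1) = ((X - D ε^a)^n - ω^n ε^{an}) ((X - D ε̄^a)^n + ω^n ε̄^{an})`, and `U_{2n-1}(a)` is minus
its linear coefficient. Since `ε ε̄ = -c`, this makes `U_{2n-1}(a)` a combination of `ε^a` and
`ε̄^a` twisted by `(-c)^{(n-1)a}`, and `ε`, `ε̄` are the roots of `t^2 = 2 D^n t + c`.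
-/

open Polynomial IntermediateField

theorem pow_eq_one_of_sq_eq_one_of_even {M : Type*} [Monoid M] {c : M} (hc : c ^ 2 = 1) {m : ℕ}
    (hm : Even m) : c ^ m = 1 := by
  obtain ⟨k, rfl⟩ := hm
  rw [← two_mul, pow_mul, hc, one_pow]

theorem pow_eq_self_of_sq_eq_one_of_odd {M : Type*} [Monoid M] {c : M} (hc : c ^ 2 = 1) {m : ℕ}
    (hm : Odd m) : c ^ m = c := by
  obtain ⟨k, rfl⟩ := hm
  rw [pow_succ, pow_mul, hc, one_pow, one_mul]

theorem zpow_recurrence_of_sq_eq {K : Type*} [Field K] {l p q x y : K} (hl : l ≠ 0) (hx : x ≠ 0)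
    (hy : y ≠ 0) (hx2 : x ^ 2 = p * x + q) (hy2 : y ^ 2 = p * y + q) {A B : K} {f : ℤ → K}
    (hf : ∀ a, f a = l ^ a * (A * x ^ a + B * y ^ a)) (a : ℤ) :
    f (a + 2) = l * p * f (a + 1) + l ^ 2 * q * f a := by
  simp only [hf, zpow_add₀ hl, zpow_add₀ hx, zpow_add₀ hy, zpow_one, zpow_two]
  linear_combination l ^ a * l ^ 2 * (A * x ^ a * hx2 + B * y ^ a * hy2)

namespace Polynomial

theorem X_pow_two_mul_sub_C_sq {R : Type*} [CommRing R] (n : ℕ) (b : R) :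
    (X ^ (2 * n) - C (b ^ 2) : R[X]) = (X ^ n - C b) * (X ^ n - C (-b)) := by
  rw [C_neg, C_pow]; ring

theorem prod_roots_X_pow_sub_C_map_sub_mul {k : Type*} [Field k] [IsAlgClosed k] {n : ℕ}
    (hn : n ≠ 0) (r b e : k) :
    (((X ^ n - C r).roots).map fun z => b - e * z).prod = b ^ n - r * e ^ n := by
  have hcard : (X ^ n - C r : k[X]).roots.card = n := by
    rw [splits_iff_card_roots.mp (IsAlgClosed.splits _), natDegree_X_pow_sub_C]
  rcases eq_or_ne e 0 with rfl | he
  · simp [hcard, zero_pow hn]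
  have hfactor : ∀ y : k, (((X ^ n - C r).roots).map fun z => y - z).prod = y ^ n - r := by
    intro y
    have := congrArg (eval y)
      ((IsAlgClosed.splits (X ^ n - C r)).eq_prod_roots_of_monic (monic_X_pow_sub_C r hn))
    simpa [eval_multiset_prod, Multiset.map_map, Function.comp_def] using this.symm
  calc (((X ^ n - C r).roots).map fun z => b - e * z).prod
      = (((X ^ n - C r).roots).map fun z => e * (b / e - z)).prod := by
        congr 1; refine Multiset.map_congr rfl fun z _ => ?_; field_simp
    _ = e ^ n * ((b / e) ^ n - r) := by
        rw [Multiset.prod_map_mul, Multiset.map_const', Multiset.prod_replicate, hcard, hfactor]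
    _ = b ^ n - r * e ^ n := by
        rw [div_pow, mul_sub, mul_div_cancel₀ _ (pow_ne_zero n he)]; ring

theorem prod_roots_X_pow_sub_C_map_sub_add_mul_zpow {k : Type*} [Field k] [IsAlgClosed k]
    {n : ℕ} (hn : n ≠ 0) (D : ℕ) (a : ℤ) (r x : k) :
    (((X ^ n - C r).roots).map fun z => x - (D + z) * (D ^ n + z ^ n) ^ a).prod
      = (x - D * (D ^ n + r) ^ a) ^ n - r * ((D ^ n + r) ^ a) ^ n := by
  rw [← prod_roots_X_pow_sub_C_map_sub_mul hn]
  refine congrArg _ (Multiset.map_congr rfl fun z hz => ?_)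
  have hzn : z ^ n = r := by simpa [sub_eq_zero] using isRoot_of_mem_roots hz
  rw [hzn]; ring

section Coeff

variable {R : Type*} [CommRing R]

theorem coeff_one_mul (p q : R[X]) :
    (p * q).coeff 1 = p.coeff 0 * q.coeff 1 + p.coeff 1 * q.coeff 0 := by
  rw [coeff_mul, Finset.Nat.antidiagonal_succ]; simp [add_comm]

theorem coeff_zero_X_sub_C_pow_sub_C (n : ℕ) (u s : R) :
    ((X - C u) ^ n - C s).coeff 0 = (-u) ^ n - s := by
  rw [sub_eq_add_neg X, ← C_neg, coeff_sub, coeff_X_add_C_pow, coeff_C_zero]; simp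

theorem coeff_one_X_sub_C_pow_sub_C (n : ℕ) (u s : R) :
    ((X - C u) ^ n - C s).coeff 1 = n * (-u) ^ (n - 1) := by
  rw [sub_eq_add_neg X, ← C_neg, coeff_sub, coeff_X_add_C_pow, coeff_C_succ]; simp [mul_comm]

theorem coeff_one_mul_X_sub_C_pow_sub_C {n : ℕ} (hn : n ≠ 0) (d w e f : R) :
    (((X - C (d * e)) ^ n - C (w ^ n * e ^ n)) * ((X - C (d * f)) ^ n - C (-w ^ n * f ^ n))).coeff 1
      = -((e * f) ^ (n - 1) * n * d ^ (n - 1)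
          * (d ^ n * (e + f) + (-1) ^ (n - 1) * w ^ n * (e - f))) := by
  obtain ⟨m, rfl⟩ := Nat.exists_eq_add_one_of_ne_zero hn
  rw [coeff_one_mul, coeff_zero_X_sub_C_pow_sub_C, coeff_zero_X_sub_C_pow_sub_C,
    coeff_one_X_sub_C_pow_sub_C, coeff_one_X_sub_C_pow_sub_C, Nat.add_sub_cancel]
  have hsign : ((-1 : R) ^ m) ^ 2 = 1 := by
    rw [← pow_mul, mul_comm, pow_mul, neg_one_sq, one_pow]
  simp only [neg_mul, neg_pow (_ * _), mul_pow, pow_succ]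
  push_cast
  linear_combination -(m + 1 : R) * d ^ m * (e * f) ^ m * (d ^ (m + 1) * (e + f)) * hsign

end Coeff

theorem coeff_one_eq_of_forall_eval {k : Type*} [Field k] [Infinite k] {N : ℕ} (hN : N ≠ 0)
    (G : ℕ → k) (p : k[X])
    (h : ∀ x, ∑ j ∈ Finset.range (N + 1), (-1) ^ j * G j * x ^ (N - j) = p.eval x) :
    p.coeff 1 = (-1) ^ (N - 1) * G (N - 1) := by
  have hp : ∑ j ∈ Finset.range (N + 1), C ((-1) ^ j * G j) * X ^ (N - j) = p :=
    Polynomial.funext fun x => by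
      simp only [eval_finsetSum, eval_mul, eval_C, eval_pow, eval_X]; exact h x
  rw [← hp, finsetSum_coeff, Finset.sum_eq_single (N - 1)]
  · rw [coeff_C_mul_X_pow, if_pos (by omega)]
  · intro j hj hjN
    rw [coeff_C_mul_X_pow, if_neg (by simp at hj; omega)]
  · simp

end Polynomial

theorem minpoly_eq_X_pow_sub_C {F E : Type*} [Field F] [Field E] [Algebra F E] {α : E} {r : F}
    {N : ℕ} (hN : N ≠ 0) (hα : α ^ N = algebraMap F E r) (hdeg : (minpoly F α).natDegree = N) :
    minpoly F α = X ^ N - C r := by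
  have hroot : aeval α (X ^ N - C r) = 0 := by simp [hα]
  have hmonic : (X ^ N - C r).Monic := monic_X_pow_sub_C r hN
  exact (eq_of_monic_of_dvd_of_natDegree_le (minpoly.monic ⟨_, hmonic, hroot⟩) hmonic
    (minpoly.dvd F α hroot) (by rw [natDegree_X_pow_sub_C, hdeg])).symm

namespace IntermediateField

variable {F E : Type*} [Field F] [Field E] [Algebra F E] {α : E}

theorem prod_algHom_gen_eq_prod_aroots {M : Type*} [CommMonoid M] (hα : IsIntegral F α)
    (hsep : IsSeparable F α) [FiniteDimensional F F⟮α⟯] (g : E → M) :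
    ∏ φ : F⟮α⟯ →ₐ[F] E, g (φ (AdjoinSimple.gen F α)) = (((minpoly F α).aroots E).map g).prod := by
  classical
  let pb := adjoin.powerBasis hα
  have hgen : minpoly F pb.gen = minpoly F α := by rw [adjoin.powerBasis_gen, minpoly_gen]
  rw [Fintype.prod_equiv pb.liftEquiv' _ (fun y => g y) (fun φ => by
    simp [pb, PowerBasis.liftEquiv'_apply_coe]), Finset.prod_mem_multiset _ _ g (fun _ => rfl),
    Finset.prod_eq_multiset_prod, Multiset.toFinset_val, Multiset.dedup_eq_self.mpr, hgen]
  rw [hgen]; exact nodup_roots (Polynomial.Separable.map hsep)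

theorem algHom_mk_add_mul_zpow (φ : F⟮α⟯ →ₐ[F] E) (D n : ℕ) (a : ℤ)
    (hmem : ((D : E) + α) * ((D : E) ^ n + α ^ n) ^ a ∈ F⟮α⟯) :
    φ ⟨((D : E) + α) * ((D : E) ^ n + α ^ n) ^ a, hmem⟩
      = (D + φ (AdjoinSimple.gen F α)) * (D ^ n + φ (AdjoinSimple.gen F α) ^ n) ^ a := by
  have : (⟨((D : E) + α) * ((D : E) ^ n + α ^ n) ^ a, hmem⟩ : F⟮α⟯)
      = (D + AdjoinSimple.gen F α) * (D ^ n + AdjoinSimple.gen F α ^ n) ^ a := by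
    apply (algebraMap F⟮α⟯ E).injective
    simp only [map_mul, map_add, map_zpow₀, map_pow, map_natCast, AdjoinSimple.algebraMap_gen]
    rfl
  rw [this]; simp

end IntermediateField

theorem prod_algHom_sub_eq_eval {w : ℂ} {n : ℕ} (hn : n ≠ 0) {r : ℚ}
    (hmin : minpoly ℚ w = X ^ (2 * n) - C r) [FiniteDimensional ℚ ℚ⟮w⟯] (D : ℕ) (a : ℤ)
    (hmem : ((D : ℂ) + w) * ((D : ℂ) ^ n + w ^ n) ^ a ∈ ℚ⟮w⟯) (x : ℂ) :
    ∏ φ : ℚ⟮w⟯ →ₐ[ℚ] ℂ, (x - φ ⟨((D : ℂ) + w) * ((D : ℂ) ^ n + w ^ n) ^ a, hmem⟩)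
      = eval x (((X - C (D * (D ^ n + w ^ n) ^ a)) ^ n - C (w ^ n * ((D ^ n + w ^ n) ^ a) ^ n))
          * ((X - C (D * (D ^ n - w ^ n) ^ a)) ^ n - C (-w ^ n * ((D ^ n - w ^ n) ^ a) ^ n))) := by
  have hmonic : (X ^ (2 * n) - C r).Monic := monic_X_pow_sub_C r (by omega)
  have hint : IsIntegral ℚ w := by
    by_contra h
    exact hmonic.ne_zero (hmin ▸ minpoly.eq_zero h)
  have hr : algebraMap ℚ ℂ r = (w ^ n) ^ 2 := by
    have := minpoly.aeval ℚ w
    rw [hmin, map_sub, aeval_X_pow, aeval_C, sub_eq_zero] at this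
    rw [← this, ← pow_mul, mul_comm]
  have haroots :
      (minpoly ℚ w).aroots ℂ = (X ^ n - C (w ^ n)).roots + (X ^ n - C (-w ^ n)).roots := by
    rw [aroots_def, hmin, Polynomial.map_sub, Polynomial.map_pow, map_X, map_C, hr,
      X_pow_two_mul_sub_C_sq, roots_mul (mul_ne_zero (monic_X_pow_sub_C _ hn).ne_zero
        (monic_X_pow_sub_C _ hn).ne_zero)]
  let g : ℂ → ℂ := fun z => x - (D + z) * (D ^ n + z ^ n) ^ a
  -- Term-mode steps, not `rw`: the `ℚ`-algebra structure on `ℚ⟮w⟯` here is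
  -- `DivisionRing.toRatAlgebra`, in the general lemmas it is `IntermediateField.algebra'`.
  calc ∏ φ : ℚ⟮w⟯ →ₐ[ℚ] ℂ, (x - φ ⟨((D : ℂ) + w) * ((D : ℂ) ^ n + w ^ n) ^ a, hmem⟩)
      = ∏ φ : ℚ⟮w⟯ →ₐ[ℚ] ℂ, g (φ (AdjoinSimple.gen ℚ w)) :=
        Finset.prod_congr rfl fun φ _ => congrArg (x - ·) (algHom_mk_add_mul_zpow φ D n a hmem)
    _ = (((minpoly ℚ w).aroots ℂ).map g).prod :=
        prod_algHom_gen_eq_prod_aroots hint (minpoly.irreducible hint).separable g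
    _ = _ := by
        rw [haroots, Multiset.map_add, Multiset.prod_add,
          prod_roots_X_pow_sub_C_map_sub_add_mul_zpow hn,
          prod_roots_X_pow_sub_C_map_sub_add_mul_zpow hn, ← sub_eq_add_neg]
        simp

/-- The closed form of `U_{2n-1}(a)`, with `w` in place of `ω`. -/
noncomputable def esymmClosedForm (D n : ℕ) (c : ℤ) (w : ℂ) (a : ℤ) : ℂ :=
  (-(c : ℂ)) ^ (((n : ℤ) - 1) * a) * (n : ℂ) * (D : ℂ) ^ (n - 1) *
    ((D : ℂ) ^ n * (((D : ℂ) ^ n + w ^ n) ^ a + ((D : ℂ) ^ n - w ^ n) ^ a)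
      + (-1 : ℂ) ^ (n - 1) * w ^ n * (((D : ℂ) ^ n + w ^ n) ^ a - ((D : ℂ) ^ n - w ^ n) ^ a))

section ClosedForm

variable {D n : ℕ} {c : ℤ} {w : ℂ}

theorem add_pow_mul_sub_pow_eq_neg (hw : w ^ (2 * n) = D ^ (2 * n) + c) :
    ((D : ℂ) ^ n + w ^ n) * (D ^ n - w ^ n) = -c := by
  linear_combination -hw

theorem eq_esymmClosedForm_of_forall_prod (hn : n ≠ 0) (hw : w ^ (2 * n) = D ^ (2 * n) + c)
    {r : ℚ} (hmin : minpoly ℚ w = X ^ (2 * n) - C r) [FiniteDimensional ℚ ℚ⟮w⟯] (a : ℤ)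
    (hmem : ((D : ℂ) + w) * ((D : ℂ) ^ n + w ^ n) ^ a ∈ ℚ⟮w⟯) (G : ℕ → ℂ)
    (hG : ∀ x, ∏ φ : ℚ⟮w⟯ →ₐ[ℚ] ℂ, (x - φ ⟨((D : ℂ) + w) * ((D : ℂ) ^ n + w ^ n) ^ a, hmem⟩)
      = ∑ j ∈ Finset.range (2 * n + 1), (-1) ^ j * G j * x ^ (2 * n - j)) :
    G (2 * n - 1) = esymmClosedForm D n c w a := by
  have hcoeff := coeff_one_eq_of_forall_eval (N := 2 * n) (by omega) G _ fun x =>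
    (hG x).symm.trans (prod_algHom_sub_eq_eval hn hmin D a hmem x)
  rw [coeff_one_mul_X_sub_C_pow_sub_C hn, ← mul_zpow, add_pow_mul_sub_pow_eq_neg hw,
    (show Odd (2 * n - 1) from ⟨n - 1, by omega⟩).neg_one_pow, ← zpow_natCast _ (n - 1),
    ← zpow_mul, Nat.cast_sub (by omega : 1 ≤ n), Nat.cast_one, mul_comm a] at hcoeff
  rw [esymmClosedForm]
  linear_combination hcoeff

theorem esymmClosedForm_add_two (hn : n ≠ 0) (hc : (c : ℂ) ^ 2 = 1)
    (hw : w ^ (2 * n) = D ^ (2 * n) + c) (a : ℤ) :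
    esymmClosedForm D n c w (a + 2)
      = 2 * (-(c : ℂ)) ^ (n - 1) * D ^ n * esymmClosedForm D n c w (a + 1)
        + c * esymmClosedForm D n c w a := by
  have hc0 : (-(c : ℂ)) ≠ 0 := fun h => by simp [neg_eq_zero.mp h] at hc
  have hconj := add_pow_mul_sub_pow_eq_neg hw
  have hrec := zpow_recurrence_of_sq_eq (K := ℂ) (pow_ne_zero (n - 1) hc0)
    (left_ne_zero_of_mul (hconj ▸ hc0)) (right_ne_zero_of_mul (hconj ▸ hc0))
    (p := 2 * D ^ n) (q := c) (by linear_combination hw) (by linear_combination hw)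
    (f := esymmClosedForm D n c w) (A := n * D ^ (n - 1) * (D ^ n + (-1) ^ (n - 1) * w ^ n))
    (B := n * D ^ (n - 1) * (D ^ n - (-1) ^ (n - 1) * w ^ n))
    (fun a => by
      rw [esymmClosedForm, ← zpow_natCast (-(c : ℂ)) (n - 1), ← zpow_mul,
        Nat.cast_sub (by omega : 1 ≤ n), Nat.cast_one]
      ring) a
  have hl : ((-(c : ℂ)) ^ (n - 1)) ^ 2 = 1 := by
    rw [← pow_mul, mul_comm, pow_mul, neg_sq, hc, one_pow]
  linear_combination hrec + c * esymmClosedForm D n c w a * hl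

theorem esymmClosedForm_zero (hn : n ≠ 0) :
    esymmClosedForm D n c w 0 = 2 * n * (D : ℂ) ^ (2 * n - 1) := by
  have h : 2 * n - 1 = n - 1 + n := by
    rw [two_mul, Nat.sub_add_comm (Nat.one_le_iff_ne_zero.mpr hn)]
  rw [esymmClosedForm, h]
  simp only [mul_zero, zpow_zero, sub_self]
  ring

theorem esymmClosedForm_one (hn : n ≠ 0) (hw : w ^ (2 * n) = D ^ (2 * n) + c) :
    esymmClosedForm D n c w 1 = 2 * n * D ^ (n - 1) * (-(c : ℂ)) ^ (n - 1)
      * (D ^ (2 * n) + (-1) ^ (n - 1) * (D ^ (2 * n) + c)) := by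
  rw [esymmClosedForm, mul_one, zpow_one, zpow_one,
    show (n : ℤ) - 1 = ((n - 1 : ℕ) : ℤ) by omega, zpow_natCast]
  linear_combination (2 * n * D ^ (n - 1) * (-(c : ℂ)) ^ (n - 1) * (-1) ^ (n - 1)) * hw

theorem esymmClosedForm_one_of_even (hn : n ≠ 0) (hc : (c : ℂ) ^ 2 = 1)
    (hw : w ^ (2 * n) = D ^ (2 * n) + c) (heven : Even n) :
    esymmClosedForm D n c w 1 = 2 * n * (D : ℂ) ^ (n - 1) := by
  have hodd : Odd (n - 1) := by obtain ⟨k, hk⟩ := heven; exact ⟨k - 1, by omega⟩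
  rw [esymmClosedForm_one hn hw,
    pow_eq_self_of_sq_eq_one_of_odd (c := -(c : ℂ)) (by rwa [neg_sq]) hodd, hodd.neg_one_pow]
  linear_combination 2 * n * D ^ (n - 1) * hc

theorem esymmClosedForm_one_of_odd (hn : n ≠ 0) (hc : (c : ℂ) ^ 2 = 1)
    (hw : w ^ (2 * n) = D ^ (2 * n) + c) (hodd : Odd n) :
    esymmClosedForm D n c w 1 = 2 * n * (D : ℂ) ^ (n - 1) * (2 * (D : ℂ) ^ (2 * n) + c) := by
  have heven : Even (n - 1) := by obtain ⟨k, hk⟩ := hodd; exact ⟨k, by omega⟩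
  rw [esymmClosedForm_one hn hw,
    pow_eq_one_of_sq_eq_one_of_even (c := -(c : ℂ)) (by rwa [neg_sq]) heven, heven.neg_one_pow]
  ring

end ClosedForm

theorem stmt_8_general
    (D n : ℕ) (hn : 2 ≤ n) (c : ℤ) (hc : c = 1 ∨ c = -1)
    (ω : ℝ) (hωpow : ω ^ (2 * n) = (D : ℝ) ^ (2 * n) + (c : ℝ))
    (hdeg : (minpoly ℚ ((ω : ℂ))).natDegree = 2 * n)
    (K : IntermediateField ℚ ℂ) (hK : K = IntermediateField.adjoin ℚ {(ω : ℂ)})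
    [FiniteDimensional ℚ K]
    (hmem : ∀ a : ℤ, ((D : ℂ) + (ω : ℂ)) * ((D : ℂ) ^ n + (ω : ℂ) ^ n) ^ a ∈ K)
    (U : ℕ → ℤ → ℂ)
    (hU : ∀ (a : ℤ) (X Y : ℂ),
      (∏ φ : K →ₐ[ℚ] ℂ,
          (X - φ ⟨((D : ℂ) + (ω : ℂ)) * ((D : ℂ) ^ n + (ω : ℂ) ^ n) ^ a, hmem a⟩ * Y))
        = ∑ h ∈ Finset.range (2 * n + 1), (-1) ^ h * U h a * X ^ (2 * n - h) * Y ^ h)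
    :
    (∀ a : ℤ,
      U (2 * n - 1) a = (-(c : ℂ)) ^ (((n : ℤ) - 1) * a) * (n : ℂ) * (D : ℂ) ^ (n - 1) *
        ((D : ℂ) ^ n * (((D : ℂ) ^ n + (ω : ℂ) ^ n) ^ a + ((D : ℂ) ^ n - (ω : ℂ) ^ n) ^ a)
          + (-1 : ℂ) ^ (n - 1) * (ω : ℂ) ^ n *
            (((D : ℂ) ^ n + (ω : ℂ) ^ n) ^ a - ((D : ℂ) ^ n - (ω : ℂ) ^ n) ^ a))) ∧
    (∀ a : ℤ,
      U (2 * n - 1) (a + 2)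
        = 2 * (-(c : ℂ)) ^ (n - 1) * (D : ℂ) ^ n * U (2 * n - 1) (a + 1)
          + (c : ℂ) * U (2 * n - 1) a) ∧
    U (2 * n - 1) 0 = 2 * (n : ℂ) * (D : ℂ) ^ (2 * n - 1) ∧
    (Even n → U (2 * n - 1) 1 = 2 * (n : ℂ) * (D : ℂ) ^ (n - 1)) ∧
    (Odd n → U (2 * n - 1) 1
      = 2 * (n : ℂ) * (D : ℂ) ^ (n - 1) * (2 * (D : ℂ) ^ (2 * n) + (c : ℂ))) := by
  subst hK
  have hn0 : n ≠ 0 := by omega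
  have hc2 : (c : ℂ) ^ 2 = 1 := by rcases hc with rfl | rfl <;> norm_num
  have hw : (ω : ℂ) ^ (2 * n) = D ^ (2 * n) + c := by
    exact_mod_cast congrArg (fun x : ℝ => (x : ℂ)) hωpow
  have hmin : minpoly ℚ (ω : ℂ) = X ^ (2 * n) - C ((D : ℚ) ^ (2 * n) + c) :=
    minpoly_eq_X_pow_sub_C (by omega) (by simp [hw]) hdeg
  have hformula (a : ℤ) : U (2 * n - 1) a = esymmClosedForm D n c ω a :=
    eq_esymmClosedForm_of_forall_prod hn0 hw hmin a (hmem a) (U · a) fun x => by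
      simpa using hU a x 1
  refine ⟨hformula, fun a => ?_, ?_, fun heven => ?_, fun hodd => ?_⟩
  · simp only [hformula]; exact esymmClosedForm_add_two hn0 hc2 hw a
  · rw [hformula]; exact esymmClosedForm_zero hn0
  · rw [hformula]; exact esymmClosedForm_one_of_even hn0 hc2 hw heven
  · rw [hformula]; exact esymmClosedForm_one_of_odd hn0 hc2 hw hodd

/-- With the Bernstein–Hasse notation, for every integer `a`,
`U_{2n-1}(a) = (-c)^{(n-1)a} n D^{n-1} (D^n (ε^a + ε̄^a) + (-1)^{n-1} ω^n (ε^a - ε̄^a))`;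
consequently `U_{2n-1}(a+2) = 2 (-c)^{n-1} D^n U_{2n-1}(a+1) + c U_{2n-1}(a)`, with
initial conditions `U_{2n-1}(0) = 2 n D^{2n-1}` and `U_{2n-1}(1) = 2 n D^{n-1}` if `n`
is even, `U_{2n-1}(1) = 2 n D^{n-1} (2 D^{2n} + c)` if `n` is odd. -/
theorem stmt_8
    (D n : ℕ) (hD : 0 < D) (hn : 2 ≤ n) (c : ℤ) (hc : c = 1 ∨ c = -1)
    (hbig : 1 < (D : ℤ) ^ (2 * n) + c)
    (ω : ℝ) (hω : 1 < ω) (hωpow : ω ^ (2 * n) = (D : ℝ) ^ (2 * n) + (c : ℝ))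
    (hdeg : (minpoly ℚ ((ω : ℂ))).natDegree = 2 * n)
    (K : IntermediateField ℚ ℂ) (hK : K = IntermediateField.adjoin ℚ {(ω : ℂ)})
    [FiniteDimensional ℚ K]
    (hmem : ∀ a : ℤ, ((D : ℂ) + (ω : ℂ)) * ((D : ℂ) ^ n + (ω : ℂ) ^ n) ^ a ∈ K)
    (U : ℕ → ℤ → ℂ)
    (hU : ∀ (a : ℤ) (X Y : ℂ),
      (∏ φ : K →ₐ[ℚ] ℂ,
          (X - φ ⟨((D : ℂ) + (ω : ℂ)) * ((D : ℂ) ^ n + (ω : ℂ) ^ n) ^ a, hmem a⟩ * Y))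
        = ∑ h ∈ Finset.range (2 * n + 1), (-1) ^ h * U h a * X ^ (2 * n - h) * Y ^ h)
    :
    (∀ a : ℤ,
      U (2 * n - 1) a = (-(c : ℂ)) ^ (((n : ℤ) - 1) * a) * (n : ℂ) * (D : ℂ) ^ (n - 1) *
        ((D : ℂ) ^ n * (((D : ℂ) ^ n + (ω : ℂ) ^ n) ^ a + ((D : ℂ) ^ n - (ω : ℂ) ^ n) ^ a)
          + (-1 : ℂ) ^ (n - 1) * (ω : ℂ) ^ n *
            (((D : ℂ) ^ n + (ω : ℂ) ^ n) ^ a - ((D : ℂ) ^ n - (ω : ℂ) ^ n) ^ a))) ∧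
    (∀ a : ℤ,
      U (2 * n - 1) (a + 2)
        = 2 * (-(c : ℂ)) ^ (n - 1) * (D : ℂ) ^ n * U (2 * n - 1) (a + 1)
          + (c : ℂ) * U (2 * n - 1) a) ∧
    U (2 * n - 1) 0 = 2 * (n : ℂ) * (D : ℂ) ^ (2 * n - 1) ∧
    (Even n → U (2 * n - 1) 1 = 2 * (n : ℂ) * (D : ℂ) ^ (n - 1)) ∧
    (Odd n → U (2 * n - 1) 1
      = 2 * (n : ℂ) * (D : ℂ) ^ (n - 1) * (2 * (D : ℂ) ^ (2 * n) + (c : ℂ))) :=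
  stmt_8_general D n hn c hc ω hωpow hdeg K hK hmem U hU
end

section
/- With the notation below, fix h with 1 ≤ h ≤ 2n−1. Write ∏_{ℓ=0}^{h} (T − ε^ℓ ε̄^{h−ℓ}) = T^{h+1} − c_h T^h − ⋯ − c_0. Then for every integer a, U_h(a + h + 1) = c_h·U_h(a+h) + ⋯ + c_0·U_h(a). In particular, for each 1 ≤ h ≤ 2n−1 the sequence (U_h(a))_{a∈ℤ} satisfies a linear recurrence of order h + 1 whose characteristic polynomial is ∏_{ℓ=0}^{h} (T − ε^ℓ ε̄^{h−ℓ}). -/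
open Polynomial IntermediateField

private lemma vieta_aux (N : ℕ) {σ : Type*} [Fintype σ] (hN : Fintype.card σ = 2 * N)
    (f : σ → ℂ) (u : ℕ → ℂ)
    (hU : ∀ X : ℂ, (∏ φ : σ, (X - f φ))
        = ∑ h ∈ Finset.range (2 * N + 1), (-1) ^ h * u h * X ^ (2 * N - h))
    (h : ℕ) (hh : h ≤ 2 * N) :
    u h = ∑ S ∈ Finset.univ.powersetCard h, ∏ φ ∈ S, f φ := by
  classical
  set p : ℂ[X] := ∏ φ : σ, (X - C (f φ)) with hp
  set q : ℂ[X] := ∑ j ∈ Finset.range (2 * N + 1), C ((-1) ^ j * u j) * X ^ (2 * N - j) with hq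
  have hpq : p = q := by
    apply Polynomial.funext
    intro x
    rw [hp, hq]
    simp only [eval_prod, eval_sub, eval_X, eval_C, eval_finset_sum, eval_mul, eval_pow]
    exact hU x
  have hk : 2 * N - h ≤ Multiset.card (Finset.univ.val.map f) := by
    rw [Multiset.card_map]
    show 2 * N - h ≤ Fintype.card σ
    omega
  have hcoeffp : p.coeff (2 * N - h)
      = (-1) ^ h * ∑ S ∈ Finset.univ.powersetCard h, ∏ φ ∈ S, f φ := by
    have := Multiset.prod_X_sub_C_coeff (Finset.univ.val.map f) hk
    rw [Multiset.map_map] at this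
    rw [hp, Finset.prod_eq_multiset_prod]
    have h2 : Multiset.card (Finset.univ.val.map f) - (2 * N - h) = h := by
      rw [Multiset.card_map]
      show Fintype.card σ - (2 * N - h) = h
      rw [hN]; omega
    rw [h2] at this
    rw [Finset.esymm_map_val] at this
    exact this
  have hcoeffq : q.coeff (2 * N - h) = (-1) ^ h * u h := by
    rw [hq, finset_sum_coeff]
    rw [Finset.sum_eq_single h]
    · rw [coeff_C_mul, coeff_X_pow, if_pos rfl, mul_one]
    · intro j hj hjh
      rw [coeff_C_mul, coeff_X_pow, if_neg, mul_zero]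
      simp only [Finset.mem_range] at hj
      omega
    · intro hmem
      simp only [Finset.mem_range] at hmem
      omega
  have := hcoeffp.symm.trans (hpq ▸ hcoeffq)
  have hne : ((-1 : ℂ)) ^ h ≠ 0 := pow_ne_zero _ (by norm_num)
  exact (mul_left_cancel₀ hne this).symm

/-- With the Bernstein–Hasse notation, fix `h` with `1 ≤ h ≤ 2n-1`,
and write `∏_{ℓ=0}^{h} (T - ε^ℓ ε̄^{h-ℓ}) = T^{h+1} - c_h T^h - ⋯ - c_0`. Then for
every integer `a`, `U_h(a+h+1) = c_h U_h(a+h) + ⋯ + c_0 U_h(a)`: the sequence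
`(U_h(a))_{a ∈ ℤ}` satisfies a linear recurrence of order `h+1` with characteristic
polynomial `∏_{ℓ=0}^{h} (T - ε^ℓ ε̄^{h-ℓ})`. -/
theorem stmt_11
    (D n : ℕ) (hD : 0 < D) (hn : 2 ≤ n) (c : ℤ) (hc : c = 1 ∨ c = -1)
    (hbig : 1 < (D : ℤ) ^ (2 * n) + c)
    (ω : ℝ) (hω : 1 < ω) (hωpow : ω ^ (2 * n) = (D : ℝ) ^ (2 * n) + (c : ℝ))
    (hdeg : (minpoly ℚ ((ω : ℂ))).natDegree = 2 * n)
    (K : IntermediateField ℚ ℂ) (hK : K = IntermediateField.adjoin ℚ {(ω : ℂ)})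
    [FiniteDimensional ℚ K]
    (hmem : ∀ a : ℤ, ((D : ℂ) + (ω : ℂ)) * ((D : ℂ) ^ n + (ω : ℂ) ^ n) ^ a ∈ K)
    (U : ℕ → ℤ → ℂ)
    (hU : ∀ (a : ℤ) (X Y : ℂ),
      (∏ φ : K →ₐ[ℚ] ℂ,
          (X - φ ⟨((D : ℂ) + (ω : ℂ)) * ((D : ℂ) ^ n + (ω : ℂ) ^ n) ^ a, hmem a⟩ * Y))
        = ∑ h ∈ Finset.range (2 * n + 1), (-1) ^ h * U h a * X ^ (2 * n - h) * Y ^ h)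
    (h : ℕ) (hh1 : 1 ≤ h) (hh2 : h ≤ 2 * n - 1)
    (cc : ℕ → ℂ)
    (hcc : ∀ T : ℂ,
      (∏ ℓ ∈ Finset.range (h + 1),
          (T - ((D : ℂ) ^ n + (ω : ℂ) ^ n) ^ ℓ * ((D : ℂ) ^ n - (ω : ℂ) ^ n) ^ (h - ℓ)))
        = T ^ (h + 1) - ∑ j ∈ Finset.range (h + 1), cc j * T ^ j) :
    ∀ a : ℤ,
      U h (a + (h : ℤ) + 1) = ∑ j ∈ Finset.range (h + 1), cc j * U h (a + (j : ℤ)) := by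
  classical
  -- notation
  set ε : ℂ := (D : ℂ) ^ n + (ω : ℂ) ^ n with hεdef
  set ε' : ℂ := (D : ℂ) ^ n - (ω : ℂ) ^ n with hε'def
  -- basic facts
  have hω0 : (0 : ℝ) < ω := lt_trans one_pos hω
  have hωC : ((ω : ℂ)) ^ (2 * n) = (D : ℂ) ^ (2 * n) + (c : ℂ) := by
    have := congrArg (fun x : ℝ => (x : ℂ)) hωpow
    push_cast at this
    exact this
  have hω2 : ((ω : ℂ) ^ n) ^ 2 = ((D : ℂ) ^ n) ^ 2 + (c : ℂ) := by
    rw [← pow_mul, ← pow_mul, mul_comm n 2]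
    exact hωC
  have hεne : ε ≠ 0 := by
    have hpos : (0 : ℝ) < (D : ℝ) ^ n + ω ^ n :=
      add_pos_of_nonneg_of_pos (by positivity) (pow_pos hω0 n)
    have : ε = (((D : ℝ) ^ n + ω ^ n : ℝ) : ℂ) := by push_cast [hεdef]; ring
    rw [this]
    exact_mod_cast ne_of_gt hpos
  -- the number of embeddings
  have hint : IsIntegral ℚ ((ω : ℂ)) := by
    by_contra hni
    rw [minpoly.eq_zero hni] at hdeg
    simp at hdeg
    omega
  have hN : Fintype.card (K →ₐ[ℚ] ℂ) = 2 * n := by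
    rw [AlgHom.card]
    rw [hK, ← hdeg]
    exact IntermediateField.adjoin.finrank hint
  -- ε as an element of K
  have hεK : ε ∈ K := by
    apply add_mem
    · exact pow_mem (IntermediateField.natCast_mem K D) n
    · apply pow_mem
      rw [hK]
      exact IntermediateField.mem_adjoin_simple_self ℚ ((ω : ℂ))
  set εK : K := ⟨ε, hεK⟩ with hεKdef
  set eK : ℤ → K := fun a => ⟨((D : ℂ) + (ω : ℂ)) * ε ^ a, hmem a⟩ with heKdef
  have hKmul : ∀ (a : ℤ) (j : ℕ), eK (a + (j : ℤ)) = eK a * εK ^ j := by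
    intro a j
    apply Subtype.ext
    show ((D : ℂ) + (ω : ℂ)) * ε ^ (a + (j : ℤ)) = (((D : ℂ) + (ω : ℂ)) * ε ^ a) * ε ^ j
    rw [zpow_add₀ hεne, zpow_natCast]
    ring
  -- each embedding sends εK to ε or ε'
  have hφε : ∀ φ : K →ₐ[ℚ] ℂ, φ εK = ε ∨ φ εK = ε' := by
    intro φ
    have hq : εK ^ 2 = algebraMap ℚ K (2 * (D : ℚ) ^ n) * εK + algebraMap ℚ K ((c : ℚ)) := by
      apply Subtype.ext
      push_cast
      show ε ^ 2 = (2 * (D : ℂ) ^ n) * ε + (c : ℂ)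
      rw [hεdef]
      linear_combination hω2
    have hx : (φ εK) ^ 2 = (2 * (D : ℂ) ^ n) * (φ εK) + (c : ℂ) := by
      have := congrArg φ hq
      rw [map_pow, map_add, map_mul, AlgHom.commutes, AlgHom.commutes] at this
      push_cast at this
      exact this
    have hzero : (φ εK - ε) * (φ εK - ε') = 0 := by
      rw [hεdef, hε'def]
      linear_combination hx - hω2
    rcases mul_eq_zero.mp hzero with h0 | h0
    · exact Or.inl (sub_eq_zero.mp h0)
    · exact Or.inr (sub_eq_zero.mp h0)
  -- U h a as elementary symmetric function
  have hUesymm : ∀ a : ℤ,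
      U h a = ∑ S ∈ (Finset.univ : Finset (K →ₐ[ℚ] ℂ)).powersetCard h, ∏ φ ∈ S, φ (eK a) := by
    intro a
    apply vieta_aux n hN (fun φ : K →ₐ[ℚ] ℂ => φ (eK a)) (fun j => U j a)
    · intro X
      have := hU a X 1
      simpa using this
    · omega
  -- each product of conjugates of εK over an h-set is a root
  have hρ : ∀ S ∈ (Finset.univ : Finset (K →ₐ[ℚ] ℂ)).powersetCard h,
      (∏ φ ∈ S, φ εK) ^ (h + 1)
        = ∑ j ∈ Finset.range (h + 1), cc j * (∏ φ ∈ S, φ εK) ^ j := by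
    intro S hS
    have hScard : S.card = h := (Finset.mem_powersetCard.mp hS).2
    set ρ : ℂ := ∏ φ ∈ S, φ εK with hρdef
    set S1 : Finset (K →ₐ[ℚ] ℂ) := S.filter (fun φ => φ εK = ε) with hS1def
    have hℓle : S1.card ≤ h := hScard ▸ Finset.card_filter_le S _
    have hρeq : ρ = ε ^ S1.card * ε' ^ (h - S1.card) := by
      rw [hρdef, ← Finset.prod_filter_mul_prod_filter_not S (fun φ => φ εK = ε)]
      congr 1
      · rw [Finset.prod_congr rfl (fun φ hφ => (Finset.mem_filter.mp hφ).2),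
          Finset.prod_const]
      · have hcard2 : (S.filter (fun φ => ¬ φ εK = ε)).card = h - S1.card := by
          have htot : S1.card + (S.filter (fun φ => ¬ φ εK = ε)).card = h := by
            rw [hS1def, Finset.card_filter_add_card_filter_not, hScard]
          exact Nat.eq_sub_of_add_eq' htot
        rw [Finset.prod_congr rfl (fun φ hφ => ?_), Finset.prod_const, hcard2]
        have hφS := Finset.mem_filter.mp hφ
        rcases hφε φ with h1 | h1
        · exact absurd h1 hφS.2
        · exact h1
    have hzero : ρ - ε ^ S1.card * ε' ^ (h - S1.card) = 0 := by
      rw [hρeq]; ring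
    have hprod0 : (∏ ℓ ∈ Finset.range (h + 1), (ρ - ε ^ ℓ * ε' ^ (h - ℓ))) = 0 :=
      Finset.prod_eq_zero (Finset.mem_range.mpr (Nat.lt_succ_of_le hℓle)) hzero
    have := (hcc ρ).symm.trans hprod0
    exact sub_eq_zero.mp this
  -- main computation
  intro a
  set g : Finset (K →ₐ[ℚ] ℂ) → ℂ := fun S => ∏ φ ∈ S, φ (eK a) with hgdef
  have key : ∀ j : ℕ, U h (a + (j : ℤ))
      = ∑ S ∈ (Finset.univ : Finset (K →ₐ[ℚ] ℂ)).powersetCard h, g S * (∏ φ ∈ S, φ εK) ^ j := by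
    intro j
    rw [hUesymm]
    apply Finset.sum_congr rfl
    intro S hS
    rw [hgdef]
    simp only
    rw [← Finset.prod_pow, ← Finset.prod_mul_distrib]
    apply Finset.prod_congr rfl
    intro φ hφ
    rw [hKmul a j, map_mul, map_pow]
  have harg : a + (h : ℤ) + 1 = a + ((h + 1 : ℕ) : ℤ) := by push_cast; ring
  rw [harg, key (h + 1)]
  have step : ∀ S ∈ (Finset.univ : Finset (K →ₐ[ℚ] ℂ)).powersetCard h,
      g S * (∏ φ ∈ S, φ εK) ^ (h + 1)
        = ∑ j ∈ Finset.range (h + 1), cc j * (g S * (∏ φ ∈ S, φ εK) ^ j) := by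
    intro S hS
    rw [hρ S hS, Finset.mul_sum]
    apply Finset.sum_congr rfl
    intro j hj
    ring
  rw [Finset.sum_congr rfl step, Finset.sum_comm]
  apply Finset.sum_congr rfl
  intro j hj
  rw [key j, Finset.mul_sum]
end

section
/- Let n be an integer and let f(X) = X³ − (n−1)X² − (n+2)X − 1. Then f is irreducible over ℚ, and if λ ∈ ℂ is a root of f, then λ ≠ 0, λ ≠ −1, and the numbers −1/(λ+1) and −(λ+1)/λ are also roots of f; these three numbers λ, −1/(λ+1), −(λ+1)/λ are precisely the three roots of f. -/
/-!
The Möbius map `σ x = -1 / (x + 1)` has order three and satisfies `(x + 1)³ f(σ x) = -f(x)`, so it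
permutes the roots of `f`: for a root `l`, `f(z) = (z - l)(z - σ l)(z - σ² l)`. These three roots
are distinct, since a fixed point of `σ` satisfies `l² + l + 1 = 0`, which together with `f(l) = 0`
forces `n² + n + 7 = 0`. Irreducibility: a rational root of the monic integer cubic `f` would be an
integer, but `f(m)` is odd for every integer `m`.
-/

open Polynomial

noncomputable def shanksCubic (R : Type*) [CommRing R] (a : R) : R[X] :=
  X ^ 3 - C (a - 1) * X ^ 2 - C (a + 2) * X - 1

namespace shanksCubic

section CommRing

variable {R S : Type*} [CommRing R] [CommRing S]

theorem eval_eq (a x : R) :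
    (shanksCubic R a).eval x = x ^ 3 - (a - 1) * x ^ 2 - (a + 2) * x - 1 := by
  simp [shanksCubic]

theorem map_eq (f : R →+* S) (a : R) : (shanksCubic R a).map f = shanksCubic S (f a) := by
  simp [shanksCubic, map_ofNat]

theorem monic (a : R) : (shanksCubic R a).Monic := by
  unfold shanksCubic; monicity!

theorem natDegree_eq [Nontrivial R] (a : R) : (shanksCubic R a).natDegree = 3 := by
  unfold shanksCubic; compute_degree!

theorem ne_zero_of_isRoot [Nontrivial R] {a x : R} (hx : (shanksCubic R a).IsRoot x) : x ≠ 0 := by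
  rintro rfl
  simp [IsRoot, eval_eq] at hx

theorem ne_neg_one_of_isRoot [Nontrivial R] {a x : R} (hx : (shanksCubic R a).IsRoot x) :
    x ≠ -1 := by
  rintro rfl
  rw [IsRoot.def, eval_eq] at hx
  exact one_ne_zero (by linear_combination hx)

theorem add_one_ne_zero_of_isRoot [Nontrivial R] {a x : R} (hx : (shanksCubic R a).IsRoot x) :
    x + 1 ≠ 0 := by
  simpa [add_eq_zero_iff_eq_neg] using ne_neg_one_of_isRoot hx

end CommRing

section Field

variable {K : Type*} [Field K] {a l : K}

-- after clearing denominators the two sides differ by `f(l) (z² + z)`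
theorem eval_eq_mul_of_isRoot (hl : (shanksCubic K a).IsRoot l) (z : K) :
    (shanksCubic K a).eval z = (z - l) * (z - -1 / (l + 1)) * (z - -(l + 1) / l) := by
  have hl0 := ne_zero_of_isRoot hl
  have hl1 := add_one_ne_zero_of_isRoot hl
  rw [IsRoot.def, eval_eq] at hl
  rw [eval_eq]
  field_simp
  linear_combination (z ^ 2 + z) * hl

theorem isRoot_neg_one_div (hl : (shanksCubic K a).IsRoot l) :
    (shanksCubic K a).IsRoot (-1 / (l + 1)) := by
  simp [IsRoot.def, eval_eq_mul_of_isRoot hl]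

theorem isRoot_neg_add_one_div (hl : (shanksCubic K a).IsRoot l) :
    (shanksCubic K a).IsRoot (-(l + 1) / l) := by
  simp [IsRoot.def, eval_eq_mul_of_isRoot hl]

-- `a² + a + 7` is the square root of the discriminant of `f`
theorem sq_add_add_one_ne_zero_of_isRoot (hl : (shanksCubic K a).IsRoot l)
    (ha : a ^ 2 + a + 7 ≠ 0) : l ^ 2 + l + 1 ≠ 0 := by
  intro hq
  rw [IsRoot.def, eval_eq] at hl
  have hlin : -3 * l + a - 1 = 0 := by linear_combination hl - (l - a) * hq
  exact ha (by linear_combination 9 * hq + (3 * l + a + 2) * hlin)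

theorem pairwise_ne_of_isRoot (hl : (shanksCubic K a).IsRoot l) (ha : a ^ 2 + a + 7 ≠ 0) :
    l ≠ -1 / (l + 1) ∧ l ≠ -(l + 1) / l ∧ -1 / (l + 1) ≠ -(l + 1) / l := by
  have hl0 := ne_zero_of_isRoot hl
  have hl1 := add_one_ne_zero_of_isRoot hl
  have hq := sq_add_add_one_ne_zero_of_isRoot hl ha
  refine ⟨fun h => hq ?_, fun h => hq ?_, fun h => hq ?_⟩ <;>
  · field_simp at h
    linear_combination h

end Field

-- `f(m) = (m - n) m (m + 1) - 2m - 1` and `m (m + 1)` is even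
theorem odd_eval_int (n m : ℤ) : Odd ((shanksCubic ℤ n).eval m) := by
  obtain ⟨k, hk⟩ := Int.even_mul_succ_self m
  refine ⟨(m - n) * k - m - 1, ?_⟩
  rw [eval_eq]
  linear_combination (m - n) * hk

theorem irreducible_rat (n : ℤ) : Irreducible (shanksCubic ℚ n) := by
  refine irreducible_of_degree_le_three_of_not_isRoot (by simp [natDegree_eq]) fun r hr => ?_
  have hr' : aeval r (shanksCubic ℤ n) = 0 := by
    rw [← eval_map_algebraMap, map_eq]; simpa using hr
  obtain ⟨m, rfl⟩ := isInteger_of_is_root_of_monic (monic n) hr'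
  rw [aeval_algebraMap_apply] at hr'
  simp only [coe_aeval_eq_eval, algebraMap_int_eq, eq_intCast, Int.cast_eq_zero] at hr'
  simpa [hr'] using odd_eval_int n m

end shanksCubic

open shanksCubic in
/-- For `n ∈ ℤ`, Shanks' simplest cubic polynomial
`f(X) = X³ - (n-1)X² - (n+2)X - 1` is irreducible over `ℚ`, and if `l ∈ ℂ` is a root
of `f`, then `l ≠ 0`, `l ≠ -1`, the numbers `-1/(l+1)` and `-(l+1)/l` are also roots
of `f`, and `l`, `-1/(l+1)`, `-(l+1)/l` are pairwise distinct and are precisely the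
three roots of `f` in `ℂ`. -/
theorem stmt_15 (n : ℤ) :
    Irreducible
      (X ^ 3 - C ((n : ℚ) - 1) * X ^ 2 - C ((n : ℚ) + 2) * X - 1 : Polynomial ℚ) ∧
    ∀ l : ℂ,
      Polynomial.aeval l
          (X ^ 3 - C ((n : ℚ) - 1) * X ^ 2 - C ((n : ℚ) + 2) * X - 1 : Polynomial ℚ)
        = 0 →
      l ≠ 0 ∧ l ≠ -1 ∧
      Polynomial.aeval (-1 / (l + 1))
          (X ^ 3 - C ((n : ℚ) - 1) * X ^ 2 - C ((n : ℚ) + 2) * X - 1 : Polynomial ℚ)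
        = 0 ∧
      Polynomial.aeval (-(l + 1) / l)
          (X ^ 3 - C ((n : ℚ) - 1) * X ^ 2 - C ((n : ℚ) + 2) * X - 1 : Polynomial ℚ)
        = 0 ∧
      l ≠ -1 / (l + 1) ∧ l ≠ -(l + 1) / l ∧ -1 / (l + 1) ≠ -(l + 1) / l ∧
      (∀ z : ℂ,
        Polynomial.aeval z
            (X ^ 3 - C ((n : ℚ) - 1) * X ^ 2 - C ((n : ℚ) + 2) * X - 1 : Polynomial ℚ)
          = 0 →
        z = l ∨ z = -1 / (l + 1) ∨ z = -(l + 1) / l) := by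
  rw [show (X ^ 3 - C ((n : ℚ) - 1) * X ^ 2 - C ((n : ℚ) + 2) * X - 1 : ℚ[X]) =
    shanksCubic ℚ n from rfl]
  have haeval (z : ℂ) : aeval z (shanksCubic ℚ n) = (shanksCubic ℂ n).eval z := by
    rw [← eval_map_algebraMap, map_eq, map_intCast]
  have hdisc : (n : ℂ) ^ 2 + n + 7 ≠ 0 := by
    exact_mod_cast (by nlinarith [sq_nonneg (2 * n + 1)] : n ^ 2 + n + 7 ≠ 0)
  simp only [haeval]
  refine ⟨irreducible_rat n, fun l hl => ?_⟩
  obtain ⟨hne₁, hne₂, hne₃⟩ := pairwise_ne_of_isRoot hl hdisc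
  refine ⟨ne_zero_of_isRoot hl, ne_neg_one_of_isRoot hl, isRoot_neg_one_div hl,
    isRoot_neg_add_one_div hl, hne₁, hne₂, hne₃, fun z hz => ?_⟩
  simpa [eval_eq_mul_of_isRoot hl, sub_eq_zero, or_assoc] using hz
end

section
/- With the notation below, for every integer a one has the polynomial identity (X − λ₁λ₂^a Y)(X − λ₂λ₃^a Y)(X − λ₃λ₁^a Y) = X³ − s_a X²Y + t_a XY² − Y³, where s_a = λ₁λ₂^a + λ₂λ₃^a + λ₃λ₁^a and t_a = λ₁^{−1}λ₂^{−a} + λ₂^{−1}λ₃^{−a} + λ₃^{−1}λ₁^{−a}; moreover s_a and t_a are rational integers, with s_a = Tr_{K/ℚ}(λ₁λ₂^a) and t_a = Tr_{K/ℚ}(λ₁^{−1}λ₂^{−a}) where K = ℚ(λ₁). -/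
/-!
The Möbius map `z ↦ -1/(z+1)` has order three and permutes the roots `λ₁ → λ₂ → λ₃ → λ₁` of
Shanks' cubic, so the three `ℚ`-embeddings of `K = ℚ(λ₁)` into `ℂ` send `λ₁ λ₂^a` to its three
cyclic shifts; summing gives `s_a` as a trace. The three shifts multiply to `(λ₁λ₂λ₃)^(a+1) = 1`,
which yields the factorisation with `t_a` the sum of their inverses. Finally `λᵢ` and `λᵢ⁻¹` are
algebraic integers, so the traces are rational algebraic integers, i.e. rational integers.
-/

open Polynomial IntermediateField

noncomputable def shanks (R : Type*) [CommRing R] (n : ℤ) : R[X] :=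
  X ^ 3 - C ((n : R) - 1) * X ^ 2 - C ((n : R) + 2) * X - 1

section Shanks

variable {R : Type*} [CommRing R] (n : ℤ)

theorem shanks_monic [Nontrivial R] : (shanks R n).Monic := by
  unfold shanks; monicity!

theorem shanks_natDegree [Nontrivial R] : (shanks R n).natDegree = 3 := by
  unfold shanks; compute_degree!

@[simp]
theorem eval_shanks (z : R) :
    (shanks R n).eval z = z ^ 3 - ((n : R) - 1) * z ^ 2 - ((n : R) + 2) * z - 1 := by
  simp [shanks]

@[simp]
theorem map_shanks {S : Type*} [CommRing S] (f : R →+* S) : (shanks R n).map f = shanks S n := by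
  simp [shanks, map_ofNat]

@[simp]
theorem aeval_shanks {A : Type*} [CommRing A] [Algebra R A] (z : A) :
    aeval z (shanks R n) = z ^ 3 - ((n : A) - 1) * z ^ 2 - ((n : A) + 2) * z - 1 := by
  rw [aeval_def, eval₂_eq_eval_map, map_shanks, eval_shanks]

end Shanks

theorem irreducible_shanks (n : ℤ) : Irreducible (shanks ℚ n) := by
  rw [irreducible_iff_roots_eq_zero_of_degree_le_three (by rw [shanks_natDegree]; norm_num)
    (by rw [shanks_natDegree]), Multiset.eq_zero_iff_forall_notMem]
  intro q hq
  rw [mem_roots (shanks_monic n).ne_zero, IsRoot.def, eval_shanks] at hq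
  obtain ⟨r, rfl, hr⟩ := exists_integer_of_is_root_of_monic (A := ℤ) (K := ℚ) (shanks_monic n)
    (by rwa [aeval_shanks])
  have hc : (shanks ℤ n).coeff 0 = -1 := by simp [shanks, coeff_one]
  rw [hc, dvd_neg, ← isUnit_iff_dvd_one, Int.isUnit_iff] at hr
  rcases hr with rfl | rfl <;> push_cast at hq
  · have : ((2 * n + 1 : ℤ) : ℚ) = 0 := by push_cast; linear_combination -hq
    rw [Int.cast_eq_zero] at this
    omega
  · exact one_ne_zero (by linear_combination hq : (1 : ℚ) = 0)

def shanksShift {F : Type*} [Field F] (z : F) : F := -1 / (z + 1)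

theorem map_shanksShift {F E G : Type*} [Field F] [Field E] [FunLike G F E] [RingHomClass G F E]
    (f : G) (z : F) :
    f (shanksShift z) = shanksShift (f z) := by
  simp [shanksShift, map_div₀]

section Roots

variable {F : Type*} [Field F] {n : ℤ} {z : F} (hz : (shanks F n).eval z = 0)
include hz

theorem ne_zero_of_eval_shanks_eq_zero : z ≠ 0 := by
  rintro rfl; simp at hz

theorem add_one_ne_zero_of_eval_shanks_eq_zero : z + 1 ≠ 0 := by
  intro h
  rw [eq_neg_of_add_eq_zero_left h] at hz
  simp only [eval_shanks] at hz
  exact one_ne_zero (by linear_combination hz : (1 : F) = 0)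

theorem shanksShift_shanksShift_of_eval_shanks_eq_zero :
    shanksShift (shanksShift z) = -(z + 1) / z := by
  have h0 := ne_zero_of_eval_shanks_eq_zero hz
  have h1 := add_one_ne_zero_of_eval_shanks_eq_zero hz
  rw [shanksShift, shanksShift, div_add_one h1, neg_add_cancel_comm_assoc, div_div_eq_mul_div,
    neg_one_mul]

theorem shanksShift_shanksShift_shanksShift_of_eval_shanks_eq_zero :
    shanksShift (shanksShift (shanksShift z)) = z := by
  have h0 := ne_zero_of_eval_shanks_eq_zero hz
  rw [shanksShift_shanksShift_of_eval_shanks_eq_zero hz, shanksShift]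
  field_simp
  ring

theorem mul_shanksShift_mul_shanksShift_of_eval_shanks_eq_zero :
    z * shanksShift z * shanksShift (shanksShift z) = 1 := by
  have h0 := ne_zero_of_eval_shanks_eq_zero hz
  have h1 := add_one_ne_zero_of_eval_shanks_eq_zero hz
  rw [shanksShift_shanksShift_of_eval_shanks_eq_zero hz, shanksShift]
  field_simp

theorem shanks_eq_prod_of_eval_shanks_eq_zero :
    shanks F n = (X - C z) * (X - C (shanksShift z)) * (X - C (shanksShift (shanksShift z))) := by
  have h0 := ne_zero_of_eval_shanks_eq_zero hz
  have h1 := add_one_ne_zero_of_eval_shanks_eq_zero hz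
  have hρρ := shanksShift_shanksShift_of_eval_shanks_eq_zero hz
  have hprod := mul_shanksShift_mul_shanksShift_of_eval_shanks_eq_zero hz
  set w := shanksShift (shanksShift z)
  rw [eval_shanks] at hz
  have hsum : z + shanksShift z + w = n - 1 := by
    rw [hρρ, shanksShift]; field_simp; linear_combination hz
  have hpair : z * shanksShift z + z * w + shanksShift z * w = -(n + 2) := by
    rw [hρρ, shanksShift]; field_simp; linear_combination -hz
  calc shanks F n
      = X ^ 3 - C (z + shanksShift z + w) * X ^ 2
          - C (-(z * shanksShift z + z * w + shanksShift z * w)) * X - C (z * shanksShift z * w) := by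
        rw [hsum, hpair, neg_neg, hprod, map_one, shanks]
    _ = (X - C z) * (X - C (shanksShift z)) * (X - C w) := by
        simp only [map_add, map_mul, map_neg]; ring

theorem prod_conj_mul_shanksShift_zpow_eq_one (a : ℤ) :
    z * shanksShift z ^ a * (shanksShift z * shanksShift (shanksShift z) ^ a)
      * (shanksShift (shanksShift z) * z ^ a) = 1 := by
  have h := mul_shanksShift_mul_shanksShift_of_eval_shanks_eq_zero hz
  calc _ = z * shanksShift z * shanksShift (shanksShift z)
        * (z * shanksShift z * shanksShift (shanksShift z)) ^ a := by
        rw [mul_zpow, mul_zpow]; ring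
    _ = 1 := by rw [h, one_zpow, one_mul]

end Roots

theorem eval_shanksShift_eq_zero {F : Type*} [Field F] {n : ℤ} {z : F}
    (hz : (shanks F n).eval z = 0) : (shanks F n).eval (shanksShift z) = 0 := by
  rw [shanks_eq_prod_of_eval_shanks_eq_zero hz]; simp

theorem isIntegral_zpow {R K : Type*} [CommRing R] [Field K] [Algebra R K] {x : K}
    (hx : IsIntegral R x) (hx' : IsIntegral R x⁻¹) (a : ℤ) : IsIntegral R (x ^ a) := by
  obtain ⟨k, rfl | rfl⟩ := a.eq_nat_or_neg
  · simpa using hx.pow k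
  · simpa using hx'.pow k

section Integrality

variable {F : Type*} [Field F] {n : ℤ} {z : F} (hz : (shanks F n).eval z = 0)
include hz

theorem isIntegral_of_eval_shanks_eq_zero : IsIntegral ℤ z :=
  ⟨shanks ℤ n, shanks_monic n, (aeval_shanks n z).trans ((eval_shanks n z).symm.trans hz)⟩

theorem isIntegral_zpow_of_eval_shanks_eq_zero (a : ℤ) : IsIntegral ℤ (z ^ a) := by
  have hρ := eval_shanksShift_eq_zero hz
  have hinv : z⁻¹ = shanksShift z * shanksShift (shanksShift z) :=
    inv_eq_of_mul_eq_one_right <| by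
      rw [← mul_assoc, mul_shanksShift_mul_shanksShift_of_eval_shanks_eq_zero hz]
  refine isIntegral_zpow (isIntegral_of_eval_shanks_eq_zero hz) ?_ a
  rw [hinv]
  exact (isIntegral_of_eval_shanks_eq_zero hρ).mul
    (isIntegral_of_eval_shanks_eq_zero (eval_shanksShift_eq_zero hρ))

end Integrality

theorem sum_algHom_adjoin_apply_gen {F E M : Type*} [Field F] [Field E] [Algebra F E]
    [AddCommMonoid M] {α : E} (hα : IsIntegral F α) (hsep : IsSeparable F α)
    [Fintype (F⟮α⟯ →ₐ[F] E)] (f : E → M) :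
    ∑ σ : F⟮α⟯ →ₐ[F] E, f (σ (AdjoinSimple.gen F α)) = (((minpoly F α).aroots E).map f).sum := by
  classical
  rw [Fintype.sum_equiv (algHomAdjoinIntegralEquiv F hα) _ (fun x => f x.1), Finset.sum_mem_multiset
    _ _ f fun _ => rfl, Finset.sum_eq_multiset_sum, Multiset.toFinset_val,
    Multiset.dedup_eq_self.mpr (nodup_roots ((separable_map _).mpr hsep))]
  intro σ
  rw [← algHomAdjoinIntegralEquiv_symm_apply_gen F hα, Equiv.symm_apply_apply]

section Trace

variable {E : Type*} [Field E] [CharZero E] {n : ℤ} {l : E} (hl : aeval l (shanks ℚ n) = 0)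
include hl

theorem eval_shanks_eq_zero_of_aeval : (shanks E n).eval l = 0 := by
  rw [← map_shanks (R := ℚ) n (algebraMap ℚ E), eval_map_algebraMap, hl]

theorem minpoly_eq_shanks : minpoly ℚ l = shanks ℚ n :=
  (minpoly.eq_of_irreducible_of_monic (irreducible_shanks n) hl (shanks_monic n)).symm

theorem aroots_shanks :
    (shanks ℚ n).aroots E = {l, shanksShift l, shanksShift (shanksShift l)} := by
  rw [aroots_def, map_shanks, shanks_eq_prod_of_eval_shanks_eq_zero
    (eval_shanks_eq_zero_of_aeval hl), ← roots_multiset_prod_X_sub_C {l, _, _}]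
  simp [mul_assoc]

theorem exists_int_trace_adjoin_shanks {m a : ℤ} {x : ℚ⟮l⟯}
    (hx : (x : E) = l ^ m * shanksShift l ^ a) : ∃ k : ℤ, Algebra.trace ℚ ℚ⟮l⟯ x = k := by
  have hint : IsIntegral ℚ l := ⟨shanks ℚ n, shanks_monic n, hl⟩
  have := adjoin.finiteDimensional hint
  have hz := eval_shanks_eq_zero_of_aeval hl
  have hxint : IsIntegral ℤ x := by
    rw [← isIntegral_algebraMap_iff (algebraMap ℚ⟮l⟯ E).injective,
      IntermediateField.algebraMap_apply, hx]
    exact (isIntegral_zpow_of_eval_shanks_eq_zero hz m).mul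
      (isIntegral_zpow_of_eval_shanks_eq_zero (eval_shanksShift_eq_zero hz) a)
  obtain ⟨k, hk⟩ := IsIntegrallyClosed.isIntegral_iff.mp
    (Algebra.isIntegral_trace (L := ℚ) hxint)
  exact ⟨k, hk.symm⟩

variable [IsAlgClosed E]

theorem algebraMap_trace_adjoin_shanks {m a : ℤ} {x : ℚ⟮l⟯}
    (hx : (x : E) = l ^ m * shanksShift l ^ a) :
    algebraMap ℚ E (Algebra.trace ℚ ℚ⟮l⟯ x) = l ^ m * shanksShift l ^ a
      + shanksShift l ^ m * shanksShift (shanksShift l) ^ a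
      + shanksShift (shanksShift l) ^ m * l ^ a := by
  have hint : IsIntegral ℚ l := ⟨shanks ℚ n, shanks_monic n, hl⟩
  have := adjoin.finiteDimensional hint
  have hxg : x = AdjoinSimple.gen ℚ l ^ m * shanksShift (AdjoinSimple.gen ℚ l) ^ a := by
    refine (algebraMap ℚ⟮l⟯ E).injective ?_
    rw [map_mul, map_zpow₀, map_zpow₀, map_shanksShift, AdjoinSimple.algebraMap_gen]
    exact hx
  have hσ (σ : ℚ⟮l⟯ →ₐ[ℚ] E) :
      σ x = σ (AdjoinSimple.gen ℚ l) ^ m * shanksShift (σ (AdjoinSimple.gen ℚ l)) ^ a := by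
    rw [hxg, map_mul, map_zpow₀, map_zpow₀, map_shanksShift]
  rw [trace_eq_sum_embeddings, Fintype.sum_congr _ _ hσ]
  -- not `rw`: the two `Fintype` instances on the embeddings agree only up to unfolding
  refine (sum_algHom_adjoin_apply_gen hint (minpoly.irreducible hint).separable
    fun z => z ^ m * shanksShift z ^ a).trans ?_
  rw [minpoly_eq_shanks hl, aroots_shanks hl]
  simp [shanksShift_shanksShift_shanksShift_of_eval_shanks_eq_zero
    (eval_shanks_eq_zero_of_aeval hl), add_assoc]

end Trace

theorem sub_mul_sub_mul_sub_eq_of_mul_mul_eq_one {K : Type*} [Field K] {α β γ : K}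
    (h : α * β * γ = 1) (X Y : K) :
    (X - α * Y) * (X - β * Y) * (X - γ * Y)
      = X ^ 3 - (α + β + γ) * X ^ 2 * Y + (α⁻¹ + β⁻¹ + γ⁻¹) * X * Y ^ 2 - Y ^ 3 := by
  rw [inv_eq_of_mul_eq_one_right (by rw [← mul_assoc, h] : α * (β * γ) = 1),
    inv_eq_of_mul_eq_one_right (by rw [← h]; ring : β * (γ * α) = 1),
    inv_eq_of_mul_eq_one_right (by rw [← h]; ring : γ * (α * β) = 1)]
  linear_combination (-Y ^ 3) * h

theorem stmt_16_general (n : ℤ) (l1 l2 l3 : ℂ)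
    (hroot : Polynomial.aeval l1
      (X ^ 3 - C ((n : ℚ) - 1) * X ^ 2 - C ((n : ℚ) + 2) * X - 1 : Polynomial ℚ) = 0)
    (hl2 : l2 = -1 / (l1 + 1)) (hl3 : l3 = -(l1 + 1) / l1)
    (s t : ℤ → ℂ)
    (hs : ∀ a : ℤ, s a = l1 * l2 ^ a + l2 * l3 ^ a + l3 * l1 ^ a)
    (ht : ∀ a : ℤ, t a = l1⁻¹ * l2 ^ (-a) + l2⁻¹ * l3 ^ (-a) + l3⁻¹ * l1 ^ (-a))
    (K : IntermediateField ℚ ℂ) (hK : K = IntermediateField.adjoin ℚ {l1})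
    (hmemS : ∀ a : ℤ, l1 * l2 ^ a ∈ K) (hmemT : ∀ a : ℤ, l1⁻¹ * l2 ^ (-a) ∈ K) :
    ∀ a : ℤ,
      (∀ X Y : ℂ,
        (X - l1 * l2 ^ a * Y) * (X - l2 * l3 ^ a * Y) * (X - l3 * l1 ^ a * Y)
          = X ^ 3 - s a * X ^ 2 * Y + t a * X * Y ^ 2 - Y ^ 3) ∧
      (∃ si : ℤ, s a = (si : ℂ)) ∧ (∃ ti : ℤ, t a = (ti : ℂ)) ∧
      s a = ((Algebra.trace ℚ K ⟨l1 * l2 ^ a, hmemS a⟩ : ℚ) : ℂ) ∧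
      t a = ((Algebra.trace ℚ K ⟨l1⁻¹ * l2 ^ (-a), hmemT a⟩ : ℚ) : ℂ) := by
  intro a
  subst hK
  have hl : aeval l1 (shanks ℚ n) = 0 := hroot
  have hz := eval_shanks_eq_zero_of_aeval hl
  have hl2' : shanksShift l1 = l2 := hl2.symm
  have hl3' : shanksShift l2 = l3 := by
    rw [← hl2', shanksShift_shanksShift_of_eval_shanks_eq_zero hz, hl3]
  have hS : s a = ((Algebra.trace ℚ ℚ⟮l1⟯ ⟨_, hmemS a⟩ : ℚ) : ℂ) := by
    rw [← eq_ratCast (algebraMap ℚ ℂ), algebraMap_trace_adjoin_shanks hl (m := 1) (a := a)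
      (by simp [hl2']), hs, hl2', hl3']
    simp
  have hT : t a = ((Algebra.trace ℚ ℚ⟮l1⟯ ⟨_, hmemT a⟩ : ℚ) : ℂ) := by
    rw [← eq_ratCast (algebraMap ℚ ℂ), algebraMap_trace_adjoin_shanks hl (m := -1) (a := -a)
      (by simp [hl2']), ht, hl2', hl3']
    simp
  obtain ⟨si, hsi⟩ := exists_int_trace_adjoin_shanks hl (m := 1) (a := a) (x := ⟨_, hmemS a⟩)
    (by simp [hl2'])
  obtain ⟨ti, hti⟩ := exists_int_trace_adjoin_shanks hl (m := -1) (a := -a) (x := ⟨_, hmemT a⟩)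
    (by simp [hl2'])
  have hprod := prod_conj_mul_shanksShift_zpow_eq_one hz a
  rw [hl2', hl3'] at hprod
  refine ⟨fun X Y => ?_, ⟨si, by rw [hS, hsi, Rat.cast_intCast]⟩,
    ⟨ti, by rw [hT, hti, Rat.cast_intCast]⟩, hS, hT⟩
  rw [sub_mul_sub_mul_sub_eq_of_mul_mul_eq_one hprod, hs, ht]
  simp only [mul_inv, zpow_neg]

/-- With `f(X) = X³ - (n-1)X² - (n+2)X - 1` Shanks' simplest cubic,
`l₁` a root of `f`, `l₂ = -1/(l₁+1)` and `l₃ = -(l₁+1)/l₁` the other two roots,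
`K = ℚ(l₁)`, and `s_a = l₁l₂^a + l₂l₃^a + l₃l₁^a`,
`t_a = l₁⁻¹l₂^{-a} + l₂⁻¹l₃^{-a} + l₃⁻¹l₁^{-a}`: for every integer `a`,
`(X - l₁l₂^a Y)(X - l₂l₃^a Y)(X - l₃l₁^a Y) = X³ - s_a X²Y + t_a XY² - Y³`;
moreover `s_a` and `t_a` are rational integers, with `s_a = Tr_{K/ℚ}(l₁l₂^a)` and
`t_a = Tr_{K/ℚ}(l₁⁻¹l₂^{-a})`. -/
theorem stmt_16 (n : ℤ) (l1 l2 l3 : ℂ)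
    (hroot : Polynomial.aeval l1
      (X ^ 3 - C ((n : ℚ) - 1) * X ^ 2 - C ((n : ℚ) + 2) * X - 1 : Polynomial ℚ) = 0)
    (hl2 : l2 = -1 / (l1 + 1)) (hl3 : l3 = -(l1 + 1) / l1)
    (s t : ℤ → ℂ)
    (hs : ∀ a : ℤ, s a = l1 * l2 ^ a + l2 * l3 ^ a + l3 * l1 ^ a)
    (ht : ∀ a : ℤ, t a = l1⁻¹ * l2 ^ (-a) + l2⁻¹ * l3 ^ (-a) + l3⁻¹ * l1 ^ (-a))
    (K : IntermediateField ℚ ℂ) (hK : K = IntermediateField.adjoin ℚ {l1})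
    [FiniteDimensional ℚ K]
    (hmemS : ∀ a : ℤ, l1 * l2 ^ a ∈ K) (hmemT : ∀ a : ℤ, l1⁻¹ * l2 ^ (-a) ∈ K) :
    ∀ a : ℤ,
      (∀ X Y : ℂ,
        (X - l1 * l2 ^ a * Y) * (X - l2 * l3 ^ a * Y) * (X - l3 * l1 ^ a * Y)
          = X ^ 3 - s a * X ^ 2 * Y + t a * X * Y ^ 2 - Y ^ 3) ∧
      (∃ si : ℤ, s a = (si : ℂ)) ∧ (∃ ti : ℤ, t a = (ti : ℂ)) ∧
      s a = ((Algebra.trace ℚ K ⟨l1 * l2 ^ a, hmemS a⟩ : ℚ) : ℂ) ∧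
      t a = ((Algebra.trace ℚ K ⟨l1⁻¹ * l2 ^ (-a), hmemT a⟩ : ℚ) : ℂ) :=
  stmt_16_general n l1 l2 l3 hroot hl2 hl3 s t hs ht K hK hmemS hmemT
end

section
/- Let D be a positive integer, n ≥ 2 an integer, and c ∈ {−1, 1} with D^{2n} + c > 1. Let ω > 1 be the real 2n-th root of D^{2n} + c, and assume ω has degree 2n over ℚ; set K = ℚ(ω). Then α = D + ω and ε = D^n + ω^n are units in the ring of integers of K; in particular N_{K/ℚ}(D + ω) = −c and N_{K/ℚ}(D^n + ω^n) = (−c)^n. -/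
open Polynomial IntermediateField

set_option maxHeartbeats 2000000
set_option synthInstance.maxHeartbeats 100000

/-- Let `D ≥ 1`, `n ≥ 2`, `c ∈ {-1, 1}` with `D^{2n} + c > 1`, let
`ω > 1` be the real `2n`-th root of `D^{2n} + c`, of degree `2n` over `ℚ`, and
`K = ℚ(ω)`. Then `α = D + ω` and `ε = D^n + ω^n` are units of the ring of integers of
`K`; in particular `N_{K/ℚ}(D + ω) = -c` and `N_{K/ℚ}(D^n + ω^n) = (-c)^n`. -/
theorem stmt_19 (D n : ℕ) (hD : 0 < D) (hn : 2 ≤ n) (c : ℤ) (hc : c = 1 ∨ c = -1)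
    (hbig : 1 < (D : ℤ) ^ (2 * n) + c)
    (ω : ℝ) (hω : 1 < ω) (hωpow : ω ^ (2 * n) = (D : ℝ) ^ (2 * n) + (c : ℝ))
    (hdeg : (minpoly ℚ ((ω : ℂ))).natDegree = 2 * n)
    (K : IntermediateField ℚ ℂ) (hK : K = IntermediateField.adjoin ℚ {(ω : ℂ)})
    [FiniteDimensional ℚ K]
    (hmemα : (D : ℂ) + (ω : ℂ) ∈ K) (hmemε : (D : ℂ) ^ n + (ω : ℂ) ^ n ∈ K) :
    IsIntegral ℤ ((D : ℂ) + (ω : ℂ)) ∧ IsIntegral ℤ (((D : ℂ) + (ω : ℂ))⁻¹) ∧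
    IsIntegral ℤ ((D : ℂ) ^ n + (ω : ℂ) ^ n) ∧
    IsIntegral ℤ (((D : ℂ) ^ n + (ω : ℂ) ^ n)⁻¹) ∧
    Algebra.norm ℚ (⟨(D : ℂ) + (ω : ℂ), hmemα⟩ : K) = -(c : ℚ) ∧
    Algebra.norm ℚ (⟨(D : ℂ) ^ n + (ω : ℂ) ^ n, hmemε⟩ : K) = (-(c : ℚ)) ^ n := by
  subst hK
  have hn0 : 2 * n ≠ 0 := by omega
  have hωC : (ω : ℂ) ^ (2 * n) = (D : ℂ) ^ (2 * n) + (c : ℂ) := by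
    exact_mod_cast congrArg Complex.ofReal hωpow
  have hωint : IsIntegral ℤ ((ω : ℂ)) := by
    refine ⟨X ^ (2 * n) - C ((D : ℤ) ^ (2 * n) + c), monic_X_pow_sub_C _ hn0, ?_⟩
    rw [eval₂_sub, eval₂_pow, eval₂_X, eval₂_C]
    simp only [algebraMap_int_eq, map_add, map_pow, eq_intCast]
    push_cast
    linear_combination hωC
  have hDint : IsIntegral ℤ ((D : ℂ)) := by
    have h := isIntegral_algebraMap (R := ℤ) (A := ℂ) (x := (D : ℤ))
    simpa using h
  have hαint : IsIntegral ℤ ((D : ℂ) + (ω : ℂ)) := hDint.add hωint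
  have hεint : IsIntegral ℤ ((D : ℂ) ^ n + (ω : ℂ) ^ n) := (hDint.pow n).add (hωint.pow n)
  have hcc : (c : ℂ) * (c : ℂ) = 1 := by rcases hc with rfl | rfl <;> norm_num
  -- inverse of α
  set S : ℂ := ∑ i ∈ Finset.range (2 * n), (ω : ℂ) ^ i * (-(D : ℂ)) ^ (2 * n - 1 - i) with hS
  have heven : (-(D : ℂ)) ^ (2 * n) = (D : ℂ) ^ (2 * n) := (even_two_mul n).neg_pow _
  have hSmul : S * ((D : ℂ) + (ω : ℂ)) = (c : ℂ) := by
    have h2 := geom_sum₂_mul (ω : ℂ) (-(D : ℂ)) (2 * n)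
    rw [sub_neg_eq_add, hωC, heven] at h2
    linear_combination h2
  have hαinv : (((D : ℂ) + (ω : ℂ)))⁻¹ = (c : ℂ) * S := by
    refine inv_eq_of_mul_eq_one_right ?_
    calc ((D : ℂ) + (ω : ℂ)) * ((c : ℂ) * S) = (c : ℂ) * (S * ((D : ℂ) + (ω : ℂ))) := by ring
      _ = (c : ℂ) * (c : ℂ) := by rw [hSmul]
      _ = 1 := hcc
  have hαinvint : IsIntegral ℤ ((((D : ℂ) + (ω : ℂ)))⁻¹) := by
    rw [hαinv]
    refine mul_mem (intCast_mem (integralClosure ℤ ℂ) c) ?_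
    exact sum_mem fun i _ =>
      mul_mem (pow_mem hωint i) (pow_mem (neg_mem (natCast_mem (integralClosure ℤ ℂ) D)) _)
  -- inverse of ε
  have hεmul : ((D : ℂ) ^ n + (ω : ℂ) ^ n) *
      ((c : ℂ) * ((ω : ℂ) ^ n - (D : ℂ) ^ n)) = 1 := by
    have h2 : ((ω : ℂ) ^ n) ^ 2 = (D : ℂ) ^ (2 * n) + (c : ℂ) := by
      rw [← pow_mul, mul_comm n 2]; exact hωC
    have h3 : ((D : ℂ) ^ n) ^ 2 = (D : ℂ) ^ (2 * n) := by rw [← pow_mul, mul_comm n 2]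
    linear_combination (c : ℂ) * h2 - (c : ℂ) * h3 + hcc
  have hεinv : (((D : ℂ) ^ n + (ω : ℂ) ^ n))⁻¹ =
      (c : ℂ) * ((ω : ℂ) ^ n - (D : ℂ) ^ n) := inv_eq_of_mul_eq_one_right hεmul
  have hεinvint : IsIntegral ℤ ((((D : ℂ) ^ n + (ω : ℂ) ^ n))⁻¹) := by
    rw [hεinv]
    exact mul_mem (intCast_mem (integralClosure ℤ ℂ) c)
      (sub_mem (pow_mem hωint n) (pow_mem (natCast_mem (integralClosure ℤ ℂ) D) n))
  -- rational-level facts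
  have intQω : IsIntegral ℚ ((ω : ℂ)) := hωint.tower_top
  have intQα : IsIntegral ℚ ((D : ℂ) + (ω : ℂ)) := hαint.tower_top
  have intQε : IsIntegral ℚ ((D : ℂ) ^ n + (ω : ℂ) ^ n) := hεint.tower_top
  have hpow2 : ((ω : ℂ) ^ n) ^ 2 = (D : ℂ) ^ (2 * n) + (c : ℂ) := by
    rw [← pow_mul, mul_comm n 2]; exact hωC
  have hf2 : Module.finrank ℚ ℚ⟮(ω : ℂ)⟯ = 2 * n := by
    rw [IntermediateField.adjoin.finrank intQω, hdeg]
  refine ⟨hαint, hαinvint, hεint, hεinvint, ?_, ?_⟩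
  · -- norm of α
    set g : ℚ[X] := (X - C (D : ℚ)) ^ (2 * n) - C ((D : ℚ) ^ (2 * n) + (c : ℚ)) with hg
    have hp_monic : ((X - C ((D : ℚ))) ^ (2 * n)).Monic := (monic_X_sub_C _).pow _
    have hg_monic : g.Monic := by
      refine hp_monic.sub_of_left ?_
      refine lt_of_le_of_lt (degree_C_le) ?_
      rw [degree_eq_natDegree hp_monic.ne_zero, natDegree_pow, natDegree_X_sub_C, mul_one]
      exact_mod_cast Nat.pos_of_ne_zero hn0
    have hg_deg : g.natDegree = 2 * n := by
      rw [hg, natDegree_sub_C, natDegree_pow, natDegree_X_sub_C, mul_one]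
    have hg_root : aeval ((D : ℂ) + (ω : ℂ)) g = 0 := by
      simp only [hg, map_sub, map_pow, map_add, aeval_X, aeval_C, eq_ratCast]
      push_cast
      linear_combination hωC
    have hadj : ℚ⟮(D : ℂ) + (ω : ℂ)⟯ = ℚ⟮(ω : ℂ)⟯ := by
      apply le_antisymm
      · rw [adjoin_simple_le_iff]
        exact add_mem (IntermediateField.natCast_mem _ D) (mem_adjoin_simple_self ℚ _)
      · rw [adjoin_simple_le_iff]
        simpa using sub_mem (mem_adjoin_simple_self ℚ ((D : ℂ) + (ω : ℂ)))
          (IntermediateField.natCast_mem ℚ⟮(D : ℂ) + (ω : ℂ)⟯ D)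
    have hαdeg : (minpoly ℚ ((D : ℂ) + (ω : ℂ))).natDegree = 2 * n := by
      have h1 := IntermediateField.adjoin.finrank intQα
      rw [hadj, IntermediateField.adjoin.finrank intQω, hdeg] at h1
      omega
    have hming : minpoly ℚ ((D : ℂ) + (ω : ℂ)) = g :=
      eq_of_dvd_of_natDegree_le_of_leadingCoeff (minpoly.dvd ℚ _ hg_root)
        (by rw [hg_deg, hαdeg])
        (by rw [(minpoly.monic intQα).leadingCoeff, hg_monic.leadingCoeff])
    set αK : ℚ⟮(ω : ℂ)⟯ := (⟨(D : ℂ) + (ω : ℂ), hmemα⟩ : ℚ⟮(ω : ℂ)⟯) with hαK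
    have intαK : IsIntegral ℚ αK := IsIntegral.of_finite ℚ αK
    have hmkα : minpoly ℚ αK = minpoly ℚ ((D : ℂ) + (ω : ℂ)) := by
      have h0 : algebraMap (ℚ⟮(ω : ℂ)⟯) ℂ αK = (D : ℂ) + (ω : ℂ) := rfl
      have h1 := minpoly.algebraMap_eq (A := ℚ) (algebraMap (ℚ⟮(ω : ℂ)⟯) ℂ).injective αK
      rw [h0] at h1
      exact h1.symm
    have hf1 : Module.finrank ℚ (↥(IntermediateField.adjoin ℚ {αK})) = 2 * n := by
      rw [IntermediateField.adjoin.finrank intαK, hmkα, hαdeg]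
    have he1 : Module.finrank (↥(IntermediateField.adjoin ℚ {αK})) (↥ℚ⟮(ω : ℂ)⟯) = 1 := by
      have ht := Module.finrank_mul_finrank ℚ (↥(IntermediateField.adjoin ℚ {αK})) (↥ℚ⟮(ω : ℂ)⟯)
      rw [hf1, hf2] at ht
      exact mul_left_cancel₀ hn0 (ht.trans (mul_one _).symm)
    rw [Algebra.norm_eq_norm_adjoin ℚ αK, he1, pow_one,
      ← IntermediateField.adjoin.powerBasis_gen intαK,
      Algebra.PowerBasis.norm_gen_eq_coeff_zero_minpoly,
      IntermediateField.adjoin.powerBasis_dim, IntermediateField.adjoin.powerBasis_gen,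
      IntermediateField.minpoly_gen, hmkα, hming, hg_deg, (even_two_mul n).neg_one_pow, one_mul,
      coeff_zero_eq_eval_zero]
    simp only [hg, eval_sub, eval_pow, eval_X, eval_C]
    rw [zero_sub, (even_two_mul n).neg_pow]
    ring
  · -- norm of ε
    set q : ℚ[X] := (X - C ((D : ℚ) ^ n)) ^ 2 - C ((D : ℚ) ^ (2 * n) + (c : ℚ)) with hq
    have hp_monic : ((X - C ((D : ℚ) ^ n)) ^ 2).Monic := (monic_X_sub_C _).pow _
    have hq_monic : q.Monic := by
      refine hp_monic.sub_of_left ?_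
      refine lt_of_le_of_lt (degree_C_le) ?_
      rw [degree_eq_natDegree hp_monic.ne_zero, natDegree_pow, natDegree_X_sub_C, mul_one]
      exact_mod_cast Nat.zero_lt_two
    have hq_deg : q.natDegree = 2 := by
      rw [hq, natDegree_sub_C, natDegree_pow, natDegree_X_sub_C, mul_one]
    have hq_root : aeval ((D : ℂ) ^ n + (ω : ℂ) ^ n) q = 0 := by
      simp only [hq, map_sub, map_pow, map_add, aeval_X, aeval_C, eq_ratCast]
      push_cast
      linear_combination hpow2
    have hεdeg : (minpoly ℚ ((D : ℂ) ^ n + (ω : ℂ) ^ n)).natDegree = 2 := by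
      refine le_antisymm ?_ ?_
      · have := Polynomial.natDegree_le_of_dvd (minpoly.dvd ℚ _ hq_root) hq_monic.ne_zero
        rwa [hq_deg] at this
      · refine (minpoly.two_le_natDegree_iff intQε).mpr ?_
        rintro ⟨r, hr⟩
        rw [eq_ratCast] at hr
        have hroot : aeval ((ω : ℂ)) (X ^ n - C (r - (D : ℚ) ^ n)) = 0 := by
          simp only [map_sub, map_pow, aeval_X, aeval_C, eq_ratCast]
          push_cast
          linear_combination -hr
        have hle := Polynomial.natDegree_le_of_dvd (minpoly.dvd ℚ _ hroot)
          (monic_X_pow_sub_C _ (by omega : n ≠ 0)).ne_zero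
        rw [natDegree_X_pow_sub_C, hdeg] at hle
        omega
    have hminq : minpoly ℚ ((D : ℂ) ^ n + (ω : ℂ) ^ n) = q :=
      eq_of_dvd_of_natDegree_le_of_leadingCoeff (minpoly.dvd ℚ _ hq_root)
        (by rw [hq_deg, hεdeg])
        (by rw [(minpoly.monic intQε).leadingCoeff, hq_monic.leadingCoeff])
    set εK : ℚ⟮(ω : ℂ)⟯ := (⟨(D : ℂ) ^ n + (ω : ℂ) ^ n, hmemε⟩ : ℚ⟮(ω : ℂ)⟯) with hεK
    have intεK : IsIntegral ℚ εK := IsIntegral.of_finite ℚ εK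
    have hmkε : minpoly ℚ εK = minpoly ℚ ((D : ℂ) ^ n + (ω : ℂ) ^ n) := by
      have h0 : algebraMap (ℚ⟮(ω : ℂ)⟯) ℂ εK = (D : ℂ) ^ n + (ω : ℂ) ^ n := rfl
      have h1 := minpoly.algebraMap_eq (A := ℚ) (algebraMap (ℚ⟮(ω : ℂ)⟯) ℂ).injective εK
      rw [h0] at h1
      exact h1.symm
    have hf1 : Module.finrank ℚ (↥(IntermediateField.adjoin ℚ {εK})) = 2 := by
      rw [IntermediateField.adjoin.finrank intεK, hmkε, hεdeg]
    have hen : Module.finrank (↥(IntermediateField.adjoin ℚ {εK})) (↥ℚ⟮(ω : ℂ)⟯) = n := by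
      have ht := Module.finrank_mul_finrank ℚ (↥(IntermediateField.adjoin ℚ {εK})) (↥ℚ⟮(ω : ℂ)⟯)
      rw [hf1, hf2] at ht
      exact mul_left_cancel₀ (by norm_num : (2:ℕ) ≠ 0) ht
    have hcoeff : q.coeff 0 = -(c : ℚ) := by
      rw [coeff_zero_eq_eval_zero]
      simp only [hq, eval_sub, eval_pow, eval_X, eval_C]
      have h3 : ((D : ℚ) ^ n) ^ 2 = (D : ℚ) ^ (2 * n) := by rw [← pow_mul, mul_comm n 2]
      linear_combination h3
    rw [Algebra.norm_eq_norm_adjoin ℚ εK]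
    rw [hen]
    rw [← IntermediateField.adjoin.powerBasis_gen intεK]
    rw [Algebra.PowerBasis.norm_gen_eq_coeff_zero_minpoly]
    rw [IntermediateField.adjoin.powerBasis_dim, IntermediateField.adjoin.powerBasis_gen]
    rw [IntermediateField.minpoly_gen, hmkε, hminq, hq_deg, hcoeff]
    norm_num
end
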